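/- arXiv:1902.08283 — 3 statements merged into one kernel-verified Lean document; each statement's English description precedes it below -/
import Mathlib

section
/- A uniform probability distribution supported on a finite relation D with attributes partitioned as X, Y, Z satisfies the saturated conditional independence X ⫫ Y | Z if and only if D satisfies the multivalued dependency Z ↠ X, i.e., D equals the natural join of its projections π_{XZ}(D) and π_{ZY}(D). -/
open BigOperators

/-- A uniform distribution on a finite relation D satisfies the saturated CI
X ⫫ Y | Z iff D satisfies the MVD Z ↠ X. -/
theorem stmt_6 {X Y Z : Type*} [Fintype X] [Fintype Y] [Fintype Z]
    [DecidableEq X] [DecidableEq Y] [DecidableEq Z]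
    (D : Finset (X × Y × Z)) (hD : D.Nonempty)
    (p : X × Y × Z → ℝ)
    (hp : ∀ t, p t = if t ∈ D then (1 : ℝ) / D.card else 0) :
    -- CI X ⫫ Y | Z under the uniform distribution on D
    (∀ x y z, (0 < ∑ x', ∑ y', p (x', y', z)) →
        p (x, y, z) * (∑ x', ∑ y', p (x', y', z))
          = (∑ y', p (x, y', z)) * (∑ x', p (x', y, z)))
      ↔
    -- MVD Z ↠ X
    (∀ x₁ y₁ x₂ y₂ z, (x₁, y₁, z) ∈ D → (x₂, y₂, z) ∈ D → (x₁, y₂, z) ∈ D) := by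
  have hcard : (0:ℝ) < D.card := by exact_mod_cast Finset.card_pos.mpr hD
  have hN : (0:ℝ) < 1 / D.card := by positivity
  have hnn : ∀ t, 0 ≤ p t := by
    intro t; rw [hp]; split
    · exact hN.le
    · exact le_refl 0
  have hpos : ∀ t, t ∈ D → 0 < p t := by
    intro t ht; rw [hp, if_pos ht]; exact hN
  constructor
  · intro hCI x₁ y₁ x₂ y₂ z h1 h2
    have hA : 0 < ∑ y', p (x₁, y', z) :=
      Finset.sum_pos' (fun i _ => hnn _) ⟨y₁, Finset.mem_univ _, hpos _ h1⟩
    have hB : 0 < ∑ x', p (x', y₂, z) :=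
      Finset.sum_pos' (fun i _ => hnn _) ⟨x₂, Finset.mem_univ _, hpos _ h2⟩
    have hS : 0 < ∑ x', ∑ y', p (x', y', z) :=
      Finset.sum_pos' (fun i _ => Finset.sum_nonneg fun j _ => hnn _)
        ⟨x₁, Finset.mem_univ _, hA⟩
    have heq := hCI x₁ y₂ z hS
    have hP : 0 < p (x₁, y₂, z) := by
      by_contra h
      have h0 : p (x₁, y₂, z) = 0 := le_antisymm (not_lt.mp h) (hnn _)
      rw [h0, zero_mul] at heq
      exact absurd heq.symm (ne_of_gt (mul_pos hA hB))
    by_contra hmem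
    rw [hp, if_neg hmem] at hP
    exact lt_irrefl 0 hP
  · intro hMVD x y z hS
    have hex : ∃ x₀ y₀, (x₀, y₀, z) ∈ D := by
      by_contra h
      push_neg at h
      have hz : (∑ x', ∑ y', p (x', y', z)) = 0 := by
        apply Finset.sum_eq_zero; intro x' _
        apply Finset.sum_eq_zero; intro y' _
        rw [hp, if_neg (h x' y')]
      rw [hz] at hS; exact lt_irrefl 0 hS
    obtain ⟨x₀, y₀, hx0⟩ := hex
    set q : X → ℝ := fun x' => if (x', y₀, z) ∈ D then (1:ℝ)/D.card else 0 with hq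
    set r : Y → ℝ := fun y' => if (x₀, y', z) ∈ D then (1:ℝ)/D.card else 0 with hr
    have key : ∀ x' y', p (x', y', z) = (D.card * q x') * r y' := by
      intro x' y'
      rw [hp]; simp only [hq, hr]
      by_cases h1 : (x', y₀, z) ∈ D <;> by_cases h2 : (x₀, y', z) ∈ D
      · have hm : (x', y', z) ∈ D := hMVD x' y₀ x₀ y' z h1 h2
        rw [if_pos hm, if_pos h1, if_pos h2]
        field_simp
      · have hm : (x', y', z) ∉ D := fun h => h2 (hMVD x₀ y₀ x' y' z hx0 h)
        rw [if_neg hm, if_pos h1, if_neg h2]; ring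
      · have hm : (x', y', z) ∉ D := fun h => h1 (hMVD x' y' x₀ y₀ z h hx0)
        rw [if_neg hm, if_neg h1]; ring
      · have hm : (x', y', z) ∉ D := fun h => h1 (hMVD x' y' x₀ y₀ z h hx0)
        rw [if_neg hm, if_neg h1]; ring
    have inner : ∀ x', (∑ y', p (x', y', z)) = (D.card * q x') * ∑ y', r y' := by
      intro x'
      rw [Finset.mul_sum]
      exact Finset.sum_congr rfl fun y' _ => key x' y'
    have e1 : (∑ x', ∑ y', p (x', y', z))
        = (D.card * ∑ x', q x') * ∑ y', r y' := by
      simp only [inner]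
      rw [← Finset.sum_mul, ← Finset.mul_sum]
    have e2 : (∑ y', p (x, y', z)) = (D.card * q x) * ∑ y', r y' := inner x
    have e3 : (∑ x', p (x', y, z)) = (D.card * ∑ x', q x') * r y := by
      calc ∑ x', p (x', y, z) = ∑ x', (D.card * q x') * r y := by
            exact Finset.sum_congr rfl fun x' _ => key x' y
        _ = (D.card * ∑ x', q x') * r y := by
            rw [← Finset.sum_mul, ← Finset.mul_sum]
    rw [key x y, e1, e2, e3]
    ring
end

section
/- Every minimal repair D' of a finite relation D with respect to an MVD Z ↠ X is a subset of D* = π_{XZ}(D) ⋈ π_{ZY}(D). That is, if D' satisfies the MVD and minimizes the cardinality of the symmetric difference |Δ(D, D')| among all relations satisfying the MVD, then D' ⊆ D*. -/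
/-- Every minimal repair of D w.r.t. the MVD Z ↠ X is contained in
D* = π_{XZ}(D) ⋈ π_{ZY}(D). -/
theorem stmt_8 {X Y Z : Type*} [DecidableEq X] [DecidableEq Y] [DecidableEq Z]
    (D D' : Finset (X × Y × Z))
    -- D' satisfies the MVD Z ↠ X
    (hMVD : ∀ x₁ y₁ x₂ y₂ z, (x₁, y₁, z) ∈ D' → (x₂, y₂, z) ∈ D' → (x₁, y₂, z) ∈ D')
    -- D' minimizes the symmetric difference with D among MVD-satisfying relations
    (hmin : ∀ D'' : Finset (X × Y × Z),
      (∀ x₁ y₁ x₂ y₂ z, (x₁, y₁, z) ∈ D'' → (x₂, y₂, z) ∈ D'' → (x₁, y₂, z) ∈ D'') →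
      ((D \ D') ∪ (D' \ D)).card ≤ ((D \ D'') ∪ (D'' \ D)).card) :
    -- D' ⊆ D*
    ∀ t ∈ D', (∃ y', (t.1, y', t.2.2) ∈ D) ∧ (∃ x', (x', t.2.1, t.2.2) ∈ D) := by
  classical
  intro t ht
  by_contra hcon
  set P : X × Y × Z → Prop :=
    fun s => (∃ y', (s.1, y', s.2.2) ∈ D) ∧ (∃ x', (x', s.2.1, s.2.2) ∈ D) with hPdef
  -- any tuple of D satisfies P
  have hDP : ∀ s ∈ D, P s := by
    intro s hs
    exact ⟨⟨s.2.1, hs⟩, ⟨s.1, hs⟩⟩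
  set D'' : Finset (X × Y × Z) := D'.filter P with hD''
  -- D'' satisfies the MVD
  have hMVD'' : ∀ x₁ y₁ x₂ y₂ z, (x₁, y₁, z) ∈ D'' → (x₂, y₂, z) ∈ D'' → (x₁, y₂, z) ∈ D'' := by
    intro x₁ y₁ x₂ y₂ z h1 h2
    rw [hD'', Finset.mem_filter] at h1 h2 ⊢
    exact ⟨hMVD x₁ y₁ x₂ y₂ z h1.1 h2.1, ⟨h1.2.1, h2.2.2⟩⟩
  -- D \ D'' = D \ D'
  have h1 : D \ D'' = D \ D' := by
    ext s
    simp only [Finset.mem_sdiff, hD'', Finset.mem_filter]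
    constructor
    · rintro ⟨hsD, hns⟩
      exact ⟨hsD, fun hs' => hns ⟨hs', hDP s hsD⟩⟩
    · rintro ⟨hsD, hns⟩
      exact ⟨hsD, fun hs' => hns hs'.1⟩
  -- t is in D' \ D but not in D'' \ D
  have htD : t ∉ D := fun h => hcon (hDP t h)
  have ht'' : t ∉ D'' := by
    rw [hD'', Finset.mem_filter]
    exact fun h => hcon h.2
  have h2 : D'' \ D ⊂ D' \ D := by
    constructor
    · exact Finset.sdiff_subset_sdiff (Finset.filter_subset _ _) le_rfl
    · intro hsub
      exact ht'' (Finset.mem_sdiff.mp (hsub (Finset.mem_sdiff.mpr ⟨ht, htD⟩))).1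
  have hcard : (D'' \ D).card < (D' \ D).card := Finset.card_lt_card h2
  have hdisj : ∀ (E : Finset (X × Y × Z)), Disjoint (D \ E) (E \ D) := by
    intro E
    exact Finset.disjoint_left.mpr (fun a ha hb =>
      (Finset.mem_sdiff.mp hb).2 (Finset.mem_sdiff.mp ha).1)
  have hle := hmin D'' hMVD''
  rw [h1, Finset.card_union_of_disjoint (hdisj D'),
    Finset.card_union_of_disjoint (by rw [← h1]; exact hdisj D'')] at hle
  omega
end

section
/- (Impossibility of EO and PP under differing prevalence) Let O, Y, S be finite random variables with joint pmf Pr such that all events {S=s, Y=y, O=o} have positive probability for s, y, o ∈ {0,1}. If Equalized Odds holds (S ⫫ O | Y) and Predictive Parity holds (S ⫫ Y | O), then the prevalence is equal across groups: Pr(Y=1 | S=0) = Pr(Y=1 | S=1). -/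
open BigOperators

/-- Impossibility of Equalized Odds and Predictive Parity: for a strictly
positive joint pmf over S, O, Y, if S ⫫ O | Y and S ⫫ Y | O, then
Pr(Y=1 | S=0) = Pr(Y=1 | S=1).  S, O, Y are Boolean (true = 1). -/
theorem stmt_19
    (p : Bool → Bool → Bool → ℝ)
    (hpos : ∀ s o y, 0 < p s o y)
    (hsum : ∑ s, ∑ o, ∑ y, p s o y = 1)
    -- S ⫫ O | Y
    (hEO : ∀ s o y, p s o y * (∑ s', ∑ o', p s' o' y)
      = (∑ o', p s o' y) * (∑ s', p s' o y))
    -- S ⫫ Y | O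
    (hPP : ∀ s o y, p s o y * (∑ s', ∑ y', p s' o y')
      = (∑ y', p s o y') * (∑ s', p s' o y)) :
    (∑ o, p false o true) / (∑ o, ∑ y, p false o y)
      = (∑ o, p true o true) / (∑ o, ∑ y, p true o y) := by
  have hNpos : ∀ o y, 0 < ∑ s', p s' o y :=
    fun o y => Finset.sum_pos (fun s _ => hpos s o y) Finset.univ_nonempty
  have hTpos : ∀ y, 0 < ∑ s', ∑ o', p s' o' y :=
    fun y => Finset.sum_pos (fun s _ => Finset.sum_pos (fun o _ => hpos s o y) Finset.univ_nonempty) Finset.univ_nonempty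
  have hMpos : ∀ o, 0 < ∑ s', ∑ y', p s' o y' :=
    fun o => Finset.sum_pos (fun s _ => Finset.sum_pos (fun y _ => hpos s o y) Finset.univ_nonempty) Finset.univ_nonempty
  have hDpos : ∀ s, 0 < ∑ o, ∑ y, p s o y :=
    fun s => Finset.sum_pos (fun o _ => Finset.sum_pos (fun y _ => hpos s o y) Finset.univ_nonempty) Finset.univ_nonempty
  have key : ∀ s o y, (∑ y', p s o y') * (∑ s', ∑ o', p s' o' y)
      = (∑ o', p s o' y) * (∑ s', ∑ y', p s' o y') := by
    intro s o y
    apply mul_right_cancel₀ (hNpos o y).ne'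
    linear_combination (∑ s', ∑ y', p s' o y') * hEO s o y
      - (∑ s', ∑ o', p s' o' y) * hPP s o y
  have cross : ∀ s, (∑ o', p s o' true) * (∑ s', ∑ o', p s' o' false)
      = (∑ o', p s o' false) * (∑ s', ∑ o', p s' o' true) := by
    intro s
    apply mul_right_cancel₀ (hMpos false).ne'
    linear_combination (∑ s', ∑ o', p s' o' true) * key s false false
      - (∑ s', ∑ o', p s' o' false) * key s false true
  rw [div_eq_div_iff (hDpos false).ne' (hDpos true).ne']
  apply mul_right_cancel₀ (hTpos false).ne'
  have c1 := cross false
  have c2 := cross true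
  simp only [Fintype.sum_bool] at c1 c2 ⊢
  linear_combination (p true false false + p true true false) * c1
    - (p false false false + p false true false) * c2
end
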